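/- Let M be a weighted binary matroid with nonnegative weights γ and distinguished non-loop element p. At q = 2, the values z₀ = Z̃(M\p; γ) and z₁ = Z̃(M/p; γ) satisfy z₀ ≤ z₁ < 2z₀ (and z₀ > 0). -/
import Mathlib


open Finset

/-- Vectors in GF(2)^α vanishing outside A. -/
noncomputable def supportedOn {α : Type*} [Fintype α] [DecidableEq α] (A : Finset α) :
    Submodule (ZMod 2) (α → ZMod 2) :=
  Submodule.pi (↑(Aᶜ)) fun _ => ⊥

/-- Rank function of the binary matroid with cycle space 𝒞. -/
noncomputable def rk {α : Type*} [Fintype α] [DecidableEq α]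
    (𝒞 : Submodule (ZMod 2) (α → ZMod 2)) (A : Finset α) : ℤ :=
  (A.card : ℤ) - Module.finrank (ZMod 2) ↥(𝒞 ⊓ supportedOn A)

/-- The multivariate Tutte polynomial at q = 2,
Z̃(M;γ) = Σ_{A ⊆ E} γ_A 2^{−r(A)}, of the binary matroid with cycle space 𝒞 and
ground set E. -/
noncomputable def Zt {α : Type*} [Fintype α] [DecidableEq α]
    (𝒞 : Submodule (ZMod 2) (α → ZMod 2)) (γ : α → ℝ) (E : Finset α) : ℝ :=
  ∑ A ∈ E.powerset, (∏ e ∈ A, γ e) * (2 : ℝ) ^ (-rk 𝒞 A)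

lemma mem_supportedOn {α : Type*} [Fintype α] [DecidableEq α] (A : Finset α)
    (x : α → ZMod 2) : x ∈ supportedOn A ↔ ∀ i ∉ A, x i = 0 := by
  simp [supportedOn, Submodule.mem_pi]

lemma supportedOn_mono {α : Type*} [Fintype α] [DecidableEq α] {A B : Finset α}
    (h : A ⊆ B) : supportedOn A ≤ supportedOn B := by
  intro x hx
  rw [mem_supportedOn] at *
  exact fun i hi => hx i (fun hA => hi (h hA))

set_option maxHeartbeats 800000 in
set_option synthInstance.maxHeartbeats 200000 in
lemma rk_step {α : Type*} [Fintype α] [DecidableEq α]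
    (𝒞 : Submodule (ZMod 2) (α → ZMod 2)) {A : Finset α} {p : α} (hpA : p ∉ A) :
    rk 𝒞 A ≤ rk 𝒞 (insert p A) ∧ rk 𝒞 (insert p A) ≤ rk 𝒞 A + 1 := by
  set N := 𝒞 ⊓ supportedOn (insert p A) with hN
  set K := 𝒞 ⊓ supportedOn A with hK
  have hKN : K ≤ N := inf_le_inf_left _ (supportedOn_mono (Finset.subset_insert _ _))
  set f : ↥N →ₗ[ZMod 2] ZMod 2 := (LinearMap.proj p).comp N.subtype with hf
  have hker : LinearMap.ker f = Submodule.comap N.subtype K := by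
    ext ⟨x, hx⟩
    simp only [LinearMap.mem_ker, hf, LinearMap.comp_apply, Submodule.mem_comap,
      Submodule.subtype_apply, LinearMap.proj_apply]
    constructor
    · intro hxp
      refine Submodule.mem_inf.2 ⟨(Submodule.mem_inf.1 hx).1, ?_⟩
      rw [mem_supportedOn]
      intro i hi
      by_cases hip : i = p
      · rw [hip]; exact hxp
      · exact (mem_supportedOn _ _).1 (Submodule.mem_inf.1 hx).2 i
          (by simp [Finset.mem_insert, hip, hi])
    · intro hxK
      exact (mem_supportedOn _ _).1 (Submodule.mem_inf.1 hxK).2 p hpA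
  have hrank : Module.finrank (ZMod 2) (LinearMap.range f) +
      Module.finrank (ZMod 2) (LinearMap.ker f) = Module.finrank (ZMod 2) ↥N :=
    f.finrank_range_add_finrank_ker
  have hkerK : Module.finrank (ZMod 2) (LinearMap.ker f) = Module.finrank (ZMod 2) ↥K := by
    rw [hker]
    exact (Submodule.comapSubtypeEquivOfLe hKN).finrank_eq
  have hrange : Module.finrank (ZMod 2) (LinearMap.range f) ≤ 1 := by
    have := Submodule.finrank_le (LinearMap.range f)
    rwa [Module.finrank_self] at this
  have h1 : Module.finrank (ZMod 2) ↥N ≤ Module.finrank (ZMod 2) ↥K + 1 := by omega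
  have h2 : Module.finrank (ZMod 2) ↥K ≤ Module.finrank (ZMod 2) ↥N :=
    Submodule.finrank_mono hKN
  have hcard : (insert p A).card = A.card + 1 := Finset.card_insert_of_notMem hpA
  have h1' : Module.finrank (ZMod 2) ↥(𝒞 ⊓ supportedOn (insert p A)) ≤
      Module.finrank (ZMod 2) ↥(𝒞 ⊓ supportedOn A) + 1 := h1
  have h2' : Module.finrank (ZMod 2) ↥(𝒞 ⊓ supportedOn A) ≤
      Module.finrank (ZMod 2) ↥(𝒞 ⊓ supportedOn (insert p A)) := h2
  constructor <;> · simp only [rk, hcard]; push_cast; omega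

lemma rk_empty {α : Type*} [Fintype α] [DecidableEq α]
    (𝒞 : Submodule (ZMod 2) (α → ZMod 2)) : rk 𝒞 ∅ = 0 := by
  have h : 𝒞 ⊓ supportedOn (∅ : Finset α) = ⊥ := by
    rw [eq_bot_iff]
    intro x hx
    have := (mem_supportedOn _ _).1 (Submodule.mem_inf.1 hx).2
    simp only [Finset.notMem_empty, not_false_iff, forall_true_left] at this
    exact funext fun i => this i
  simp [rk, h, finrank_bot]

lemma rk_singleton {α : Type*} [Fintype α] [DecidableEq α]
    (𝒞 : Submodule (ZMod 2) (α → ZMod 2)) (p : α)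
    (hloop : (fun i => if i = p then (1 : ZMod 2) else 0) ∉ 𝒞) :
    rk 𝒞 {p} = 1 := by
  have h : 𝒞 ⊓ supportedOn ({p} : Finset α) = ⊥ := by
    rw [eq_bot_iff]
    intro x hx
    have hsup := (mem_supportedOn _ _).1 (Submodule.mem_inf.1 hx).2
    have h2 : ∀ a : ZMod 2, a = 0 ∨ a = 1 := by decide
    rcases h2 (x p) with h0 | h1
    · refine funext fun i => ?_
      by_cases hip : i = p
      · rw [hip]; exact h0
      · exact hsup i (by simp [hip])
    · exfalso
      apply hloop
      have hxe : x = fun i => if i = p then (1 : ZMod 2) else 0 := by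
        refine funext fun i => ?_
        by_cases hip : i = p <;> simp [hip, h1, hsup i]
      exact hxe ▸ (Submodule.mem_inf.1 hx).1
  simp [rk, h, finrank_bot]

/-- For a weighted binary matroid (cycle space 𝒞, ground set E ∪ {p}) with nonnegative
weights and non-loop p, the values z₀ = Z̃(M\p;γ) and z₁ = Z̃(M/p;γ) at q = 2 satisfy
0 < z₀ and z₀ ≤ z₁ < 2z₀.  (Here Z̃(M\p;γ) = Σ_{A ⊆ E} γ_A 2^{−r(A)} and
Z̃(M/p;γ) = Σ_{A ⊆ E} γ_A 2^{−(r(A ∪ {p}) − 1)}, since r_{M/p}(A) = r(A ∪ {p}) − r({p})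
and r({p}) = 1 as p is not a loop.) -/
theorem stmt_6 {α : Type*} [Fintype α] [DecidableEq α]
    (E : Finset α) (p : α) (hp : p ∉ E)
    (𝒞 : Submodule (ZMod 2) (α → ZMod 2))
    (hsupp : ∀ x ∈ 𝒞, ∀ i, i ∉ insert p E → x i = 0)
    (hloop : (fun i => if i = p then (1 : ZMod 2) else 0) ∉ 𝒞)
    (γ : α → ℝ) (hγ : ∀ e, 0 ≤ γ e) :
    0 < Zt 𝒞 γ E ∧
      Zt 𝒞 γ E ≤
        ∑ A ∈ E.powerset, (∏ e ∈ A, γ e) * (2 : ℝ) ^ (-(rk 𝒞 (insert p A) - 1)) ∧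
      (∑ A ∈ E.powerset, (∏ e ∈ A, γ e) * (2 : ℝ) ^ (-(rk 𝒞 (insert p A) - 1))) <
        2 * Zt 𝒞 γ E := by
  have hmono : Monotone fun n : ℤ => (2 : ℝ) ^ n :=
    (zpow_right_strictMono₀ (by norm_num : (1:ℝ) < 2)).monotone
  have hempty : (∅ : Finset α) ∈ E.powerset := Finset.mem_powerset.2 (Finset.empty_subset E)
  have hγA : ∀ A : Finset α, 0 ≤ ∏ e ∈ A, γ e := fun A =>
    Finset.prod_nonneg fun e _ => hγ e
  have hpA : ∀ A ∈ E.powerset, p ∉ A := fun A hA hpa =>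
    hp (Finset.mem_powerset.1 hA hpa)
  refine ⟨?_, ?_, ?_⟩
  · apply Finset.sum_pos'
    · exact fun A _ => mul_nonneg (hγA A) (zpow_pos (by norm_num) _).le
    · refine ⟨∅, hempty, ?_⟩
      simp [rk_empty]
  · apply Finset.sum_le_sum
    intro A hA
    apply mul_le_mul_of_nonneg_left _ (hγA A)
    apply hmono
    have := (rk_step 𝒞 (hpA A hA)).2
    omega
  · rw [Zt, Finset.mul_sum]
    apply Finset.sum_lt_sum
    · intro A hA
      rw [mul_left_comm]
      apply mul_le_mul_of_nonneg_left _ (hγA A)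
      have h2 : (2 : ℝ) * (2:ℝ) ^ (-rk 𝒞 A) = (2:ℝ) ^ (1 - rk 𝒞 A) := by
        rw [sub_eq_add_neg, zpow_add₀ (by norm_num : (2:ℝ) ≠ 0), zpow_one]
      rw [h2]
      apply hmono
      have := (rk_step 𝒞 (hpA A hA)).1
      omega
    · refine ⟨∅, hempty, ?_⟩
      simp only [Finset.prod_empty, one_mul, rk_empty]
      rw [show insert p (∅ : Finset α) = {p} from rfl, rk_singleton 𝒞 p hloop]
      norm_num
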